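/- (Fully mixed NEs are saddle points of the potential) In a Markov potential game with d_θ(s) > 0 for all θ, s, suppose θ* is a fully mixed Nash equilibrium (every entry θ*_{s,a_i} > 0) and the total potential function Φ is not constant on the feasible set (Φ_min < Φ_max). Then θ* is a saddle point of Φ: for every δ > 0 there exists a feasible θ with ‖θ − θ*‖ ≤ δ and Φ(θ) > Φ(θ*). -/
import Mathlib


open Finset

namespace MAMDP

variable {n : ℕ} {S : Type} [Fintype S] [DecidableEq S]
  {A : Fin n → Type} [∀ i, Fintype (A i)] [∀ i, DecidableEq (A i)]

/-- Joint product policy probability. -/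
def jointPi (θ : ∀ i, S → A i → ℝ) (s : S) (a : ∀ i, A i) : ℝ :=
  ∏ i, θ i s (a i)

/-- One-step evolution of a state distribution under the joint policy. -/
def stepDist (P : S → (∀ i, A i) → S → ℝ) (θ : ∀ i, S → A i → ℝ) (μ : S → ℝ) : S → ℝ :=
  fun s' => ∑ s, ∑ a, μ s * jointPi θ s a * P s a s'

/-- State distribution after `t` steps, starting from `μ`. -/
def visit (P : S → (∀ i, A i) → S → ℝ) (θ : ∀ i, S → A i → ℝ) (t : ℕ) (μ : S → ℝ) : S → ℝ :=
  (stepDist P θ)^[t] μ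

/-- Point mass at `s0`. -/
def deltaDist (s0 : S) : S → ℝ := fun s => if s = s0 then 1 else 0

/-- Discounted state visitation distribution `d_θ` for initial distribution `ρ`. -/
noncomputable def dvisit (P : S → (∀ i, A i) → S → ℝ) (θ : ∀ i, S → A i → ℝ) (γ : ℝ)
    (ρ : S → ℝ) (s : S) : ℝ :=
  (1 - γ) * ∑' t : ℕ, γ ^ t * visit P θ t ρ s

/-- Expected one-step reward at state `s` under the joint policy. -/
def expRew (rw : S → (∀ i, A i) → ℝ) (θ : ∀ i, S → A i → ℝ) (s : S) : ℝ :=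
  ∑ a, jointPi θ s a * rw s a

/-- Value function: expected discounted sum of rewards starting from state `s`. -/
noncomputable def Vval (P : S → (∀ i, A i) → S → ℝ) (θ : ∀ i, S → A i → ℝ) (γ : ℝ)
    (rw : S → (∀ i, A i) → ℝ) (s : S) : ℝ :=
  ∑' t : ℕ, γ ^ t * ∑ s', visit P θ t (deltaDist s) s' * expRew rw θ s'

/-- Q-function. -/
noncomputable def Qval (P : S → (∀ i, A i) → S → ℝ) (θ : ∀ i, S → A i → ℝ) (γ : ℝ)
    (rw : S → (∀ i, A i) → ℝ) (s : S) (a : ∀ i, A i) : ℝ :=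
  rw s a + γ * ∑ s', P s a s' * Vval P θ γ rw s'

/-- Total discounted reward `J` under initial distribution `ρ`. -/
noncomputable def Jval (P : S → (∀ i, A i) → S → ℝ) (θ : ∀ i, S → A i → ℝ) (γ : ℝ)
    (rw : S → (∀ i, A i) → ℝ) (ρ : S → ℝ) : ℝ :=
  ∑ s, ρ s * Vval P θ γ rw s

/-- Averaged Q-function of agent `i`: average of `Q(s, a)` with `a i = ai` fixed,
weighted by the other agents' policies. -/
noncomputable def Qbar (P : S → (∀ i, A i) → S → ℝ) (θ : ∀ i, S → A i → ℝ) (γ : ℝ)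
    (rw : S → (∀ i, A i) → ℝ) (i : Fin n) (s : S) (ai : A i) : ℝ :=
  ∑ a : ∀ j, A j, if a i = ai then
    (∏ j ∈ Finset.univ.erase i, θ j s (a j)) * Qval P θ γ rw s a else 0

/-- Averaged advantage function of agent `i`. -/
noncomputable def Abar (P : S → (∀ i, A i) → S → ℝ) (θ : ∀ i, S → A i → ℝ) (γ : ℝ)
    (rw : S → (∀ i, A i) → ℝ) (i : Fin n) (s : S) (ai : A i) : ℝ :=
  Qbar P θ γ rw i s ai - Vval P θ γ rw s

/-- Entries of the policy gradient `∇_{θ_i} J_i(θ)`: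
`(1/(1-γ)) d_θ(s) Q̄_i^θ(s, a_i)`. -/
noncomputable def gradJ (P : S → (∀ i, A i) → S → ℝ) (θ : ∀ i, S → A i → ℝ) (γ : ℝ)
    (rw : S → (∀ i, A i) → ℝ) (ρ : S → ℝ) (i : Fin n) (s : S) (ai : A i) : ℝ :=
  (1 / (1 - γ)) * dvisit P θ γ ρ s * Qbar P θ γ rw i s ai

/-- Feasibility of agent `i`'s parameters: a point of `Δ(A_i)^{|S|}`. -/
def feasibleAgent (i : Fin n) (θi : S → A i → ℝ) : Prop :=
  ∀ s, (∀ a, 0 ≤ θi s a) ∧ ∑ a, θi s a = 1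

/-- Feasibility of a joint parameter `θ ∈ X = ∏_i Δ(A_i)^{|S|}`. -/
def feasible (θ : ∀ i, S → A i → ℝ) : Prop := ∀ i, feasibleAgent i (θ i)

/-- `P` is a transition kernel. -/
def stochMat (P : S → (∀ i, A i) → S → ℝ) : Prop :=
  ∀ s a, (∀ s', 0 ≤ P s a s') ∧ ∑ s', P s a s' = 1

/-- `ρ` is a probability distribution on states. -/
def initDist (ρ : S → ℝ) : Prop := (∀ s, 0 ≤ ρ s) ∧ ∑ s, ρ s = 1

/-- Nash equilibrium. -/
def isNE (P : S → (∀ i, A i) → S → ℝ) (γ : ℝ) (r : Fin n → S → (∀ i, A i) → ℝ)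
    (ρ : S → ℝ) (θ : ∀ i, S → A i → ℝ) : Prop :=
  feasible θ ∧ ∀ (i : Fin n) (θi' : S → A i → ℝ), feasibleAgent i θi' →
    Jval P (Function.update θ i θi') γ (r i) ρ ≤ Jval P θ γ (r i) ρ

/-- Strict Nash equilibrium. -/
def strictNE (P : S → (∀ i, A i) → S → ℝ) (γ : ℝ) (r : Fin n → S → (∀ i, A i) → ℝ)
    (ρ : S → ℝ) (θ : ∀ i, S → A i → ℝ) : Prop :=
  feasible θ ∧ ∀ (i : Fin n) (θi' : S → A i → ℝ), feasibleAgent i θi' → θi' ≠ θ i →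
    Jval P (Function.update θ i θi') γ (r i) ρ < Jval P θ γ (r i) ρ

/-- Markov potential game with potential `φ`. -/
def isPotential (P : S → (∀ i, A i) → S → ℝ) (γ : ℝ) (r : Fin n → S → (∀ i, A i) → ℝ)
    (φ : S → (∀ i, A i) → ℝ) : Prop :=
  ∀ (θ : ∀ i, S → A i → ℝ), feasible θ → ∀ (i : Fin n) (θi' : S → A i → ℝ),
    feasibleAgent i θi' → ∀ s,
    Vval P (Function.update θ i θi') γ (r i) s - Vval P θ γ (r i) s
      = Vval P (Function.update θ i θi') γ φ s - Vval P θ γ φ s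

/-- Squared Euclidean distance between two joint parameters. -/
def polNormSq (x y : ∀ i, S → A i → ℝ) : ℝ :=
  ∑ i, ∑ s, ∑ a, (x i s a - y i s a) ^ 2

/-- The deterministic (pure) joint policy picking `astar i s`. -/
def purePol (astar : ∀ i : Fin n, S → A i) : ∀ i, S → A i → ℝ :=
  fun i s a => if a = astar i s then 1 else 0


/-! ### Auxiliary machinery for the saddle point theorem -/

section Aux

variable (P : S → (∀ i, A i) → S → ℝ) (θ : ∀ i, S → A i → ℝ) (γ : ℝ)

/-- One-step state kernel induced by the joint policy. -/
def Mker (s s' : S) : ℝ := ∑ a, jointPi θ s a * P s a s'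

/-- Discounted accumulation of a state functional `c`. -/
noncomputable def Wc (c : S → ℝ) (s : S) : ℝ :=
  ∑' t : ℕ, γ ^ t * ∑ s', visit P θ t (deltaDist s) s' * c s'

/-- Advantage function. -/
noncomputable def Aval (rw : S → (∀ i, A i) → ℝ) (s : S) (a : ∀ i, A i) : ℝ :=
  Qval P θ γ rw s a - Vval P θ γ rw s

/-- Averaged advantage over an index set `I` of agents. -/
noncomputable def AbarSet (rw : S → (∀ i, A i) → ℝ) (I : Finset (Fin n)) (s : S)
    (a : ∀ i, A i) : ℝ :=
  ∑ b : ∀ j, A j, if (∀ i ∈ I, b i = a i) then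
    (∏ j ∈ Iᶜ, θ j s (b j)) * Aval P θ γ rw s b else 0

variable {P θ γ}

lemma jointPi_nonneg (hθ : feasible θ) (s : S) (a : ∀ i, A i) : 0 ≤ jointPi θ s a :=
  Finset.prod_nonneg fun i _ => ((hθ i s).1 (a i))

lemma sum_jointPi (hθ : feasible θ) (s : S) : ∑ a, jointPi θ s a = 1 := by
  unfold jointPi
  rw [← Fintype.prod_sum (fun i (x : A i) => θ i s x)]
  exact Finset.prod_eq_one fun i _ => (hθ i s).2

lemma Mker_nonneg (hP : stochMat P) (hθ : feasible θ) (s s' : S) : 0 ≤ Mker P θ s s' :=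
  Finset.sum_nonneg fun a _ => mul_nonneg (jointPi_nonneg hθ s a) ((hP s a).1 s')

lemma sum_Mker (hP : stochMat P) (hθ : feasible θ) (s : S) : ∑ s', Mker P θ s s' = 1 := by
  unfold Mker
  rw [Finset.sum_comm]
  calc ∑ a, ∑ s', jointPi θ s a * P s a s'
      = ∑ a, jointPi θ s a := by
        refine Finset.sum_congr rfl fun a _ => ?_
        rw [← Finset.mul_sum, (hP s a).2, mul_one]
    _ = 1 := sum_jointPi hθ s

lemma stepDist_linear (μ : S → ℝ) (s' : S) :
    stepDist P θ μ s' = ∑ s0, μ s0 * Mker P θ s0 s' := by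
  unfold stepDist Mker
  refine Finset.sum_congr rfl fun s0 _ => ?_
  rw [Finset.mul_sum]
  refine Finset.sum_congr rfl fun a _ => by ring

lemma stepDist_delta (s s' : S) : stepDist P θ (deltaDist s) s' = Mker P θ s s' := by
  rw [stepDist_linear]
  rw [Finset.sum_eq_single s (fun b _ hb => by simp [deltaDist, hb]) (by simp)]
  simp [deltaDist]

lemma visit_succ (μ : S → ℝ) (t : ℕ) :
    visit P θ (t + 1) μ = visit P θ t (stepDist P θ μ) := by
  unfold visit
  rw [Function.iterate_succ_apply]

lemma visit_nonneg (hP : stochMat P) (hθ : feasible θ) {μ : S → ℝ} (hμ : ∀ s, 0 ≤ μ s)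
    (t : ℕ) (s' : S) : 0 ≤ visit P θ t μ s' := by
  induction t generalizing μ hμ with
  | zero => exact hμ s'
  | succ t ih =>
      rw [visit_succ]
      refine ih (fun s'' => ?_) 
      rw [stepDist_linear]
      exact Finset.sum_nonneg fun s0 _ => mul_nonneg (hμ s0) (Mker_nonneg hP hθ s0 s'')

lemma sum_visit (hP : stochMat P) (hθ : feasible θ) (μ : S → ℝ) (t : ℕ) :
    ∑ s', visit P θ t μ s' = ∑ s, μ s := by
  induction t generalizing μ with
  | zero => rfl
  | succ t ih =>
      rw [visit_succ, ih]
      calc ∑ s, stepDist P θ μ s = ∑ s, ∑ s0, μ s0 * Mker P θ s0 s := by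
            simp_rw [stepDist_linear]
        _ = ∑ s0, μ s0 * ∑ s, Mker P θ s0 s := by
            rw [Finset.sum_comm]; simp_rw [Finset.mul_sum]
        _ = ∑ s, μ s := by
            refine Finset.sum_congr rfl fun s0 _ => ?_
            rw [sum_Mker hP hθ, mul_one]

lemma visit_le_one (hP : stochMat P) (hθ : feasible θ) {μ : S → ℝ} (hμ : ∀ s, 0 ≤ μ s)
    (hμ1 : ∑ s, μ s = 1) (t : ℕ) (s' : S) : visit P θ t μ s' ≤ 1 := by
  have h := sum_visit hP hθ μ t
  rw [hμ1] at h
  calc visit P θ t μ s' ≤ ∑ s'', visit P θ t μ s'' :=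
        Finset.single_le_sum (fun s'' _ => visit_nonneg hP hθ hμ t s'') (Finset.mem_univ s')
    _ = 1 := h

lemma visit_linear (t : ℕ) (μ : S → ℝ) (s' : S) :
    visit P θ t μ s' = ∑ s1, μ s1 * visit P θ t (deltaDist s1) s' := by
  induction t generalizing μ with
  | zero =>
      simp only [visit, Function.iterate_zero, id]
      rw [Finset.sum_eq_single s' (fun b _ hb => by simp [deltaDist, Ne.symm hb]) (by simp)]
      simp [deltaDist]
  | succ t ih =>
      rw [visit_succ, ih]
      have : ∀ s1, visit P θ (t + 1) (deltaDist s1) s' =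
          ∑ s2, Mker P θ s1 s2 * visit P θ t (deltaDist s2) s' := by
        intro s1
        rw [visit_succ, ih]
        refine Finset.sum_congr rfl fun s2 _ => by rw [stepDist_delta]
      simp_rw [this, stepDist_linear, Finset.sum_mul, Finset.mul_sum]
      rw [Finset.sum_comm]
      exact Finset.sum_congr rfl fun s1 _ => Finset.sum_congr rfl fun s2 _ => by ring

lemma deltaDist_nonneg (s s' : S) : 0 ≤ deltaDist s s' := by
  unfold deltaDist; split <;> norm_num

lemma sum_deltaDist (s : S) : ∑ s', deltaDist s s' = 1 := by
  rw [Finset.sum_eq_single s (fun b _ hb => by simp [deltaDist, hb]) (by simp)]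
  simp [deltaDist]

end Aux

section Aux2
set_option linter.unusedSectionVars false

variable {P : S → (∀ i, A i) → S → ℝ} {θ : ∀ i, S → A i → ℝ} {γ : ℝ}

lemma summable_geom_of_bound {f : ℕ → ℝ} {C γ : ℝ} (hγ0 : 0 ≤ γ) (hγ1 : γ < 1)
    (hf : ∀ t, |f t| ≤ C * γ ^ t) : Summable f := by
  refine Summable.of_abs ?_
  refine Summable.of_nonneg_of_le (fun t => abs_nonneg _) hf ?_
  exact (summable_geometric_of_lt_one hγ0 hγ1).mul_left C

lemma inner_abs_le (hP : stochMat P) (hθ : feasible θ) {μ : S → ℝ} (hμ : ∀ s, 0 ≤ μ s)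
    (hμ1 : ∑ s, μ s = 1) (c : S → ℝ) (t : ℕ) :
    |∑ s', visit P θ t μ s' * c s'| ≤ ∑ s', |c s'| := by
  calc |∑ s', visit P θ t μ s' * c s'| ≤ ∑ s', |visit P θ t μ s' * c s'| :=
        Finset.abs_sum_le_sum_abs _ _
    _ ≤ ∑ s', |c s'| := by
        refine Finset.sum_le_sum fun s' _ => ?_
        rw [abs_mul]
        have h1 : |visit P θ t μ s'| ≤ 1 := by
          rw [abs_of_nonneg (visit_nonneg hP hθ hμ t s')]
          exact visit_le_one hP hθ hμ hμ1 t s'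
        calc |visit P θ t μ s'| * |c s'| ≤ 1 * |c s'| :=
              mul_le_mul_of_nonneg_right h1 (abs_nonneg _)
          _ = |c s'| := one_mul _

lemma summable_inner (hP : stochMat P) (hθ : feasible θ) (hγ0 : 0 ≤ γ) (hγ1 : γ < 1)
    {μ : S → ℝ} (hμ : ∀ s, 0 ≤ μ s) (hμ1 : ∑ s, μ s = 1) (c : S → ℝ) :
    Summable (fun t : ℕ => γ ^ t * ∑ s', visit P θ t μ s' * c s') := by
  refine summable_geom_of_bound hγ0 hγ1 (C := ∑ s', |c s'|) fun t => ?_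
  rw [abs_mul, abs_pow, abs_of_nonneg hγ0, mul_comm]
  exact mul_le_mul_of_nonneg_right (inner_abs_le hP hθ hμ hμ1 c t) (pow_nonneg hγ0 t)

lemma Wc_bellman (hP : stochMat P) (hθ : feasible θ) (hγ0 : 0 ≤ γ) (hγ1 : γ < 1)
    (c : S → ℝ) (s : S) :
    Wc P θ γ c s = c s + γ * ∑ s1, Mker P θ s s1 * Wc P θ γ c s1 := by
  have hsum := summable_inner hP hθ hγ0 hγ1 (deltaDist_nonneg s) (sum_deltaDist s) c
  unfold Wc
  rw [Summable.tsum_eq_zero_add hsum]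
  have h0 : γ ^ 0 * ∑ s', visit P θ 0 (deltaDist s) s' * c s' = c s := by
    simp only [pow_zero, one_mul]
    have : ∀ s', visit P θ 0 (deltaDist s) s' = deltaDist s s' := fun _ => rfl
    simp_rw [this]
    rw [Finset.sum_eq_single s (fun b _ hb => by simp [deltaDist, hb]) (by simp)]
    simp [deltaDist]
  rw [h0]
  congr 1
  have hterm : ∀ t : ℕ, γ ^ (t + 1) * ∑ s', visit P θ (t + 1) (deltaDist s) s' * c s'
      = ∑ s1, Mker P θ s s1 * (γ * (γ ^ t * ∑ s', visit P θ t (deltaDist s1) s' * c s')) := by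
    intro t
    have hv : ∀ s', visit P θ (t + 1) (deltaDist s) s'
        = ∑ s1, Mker P θ s s1 * visit P θ t (deltaDist s1) s' := by
      intro s'
      rw [visit_succ, visit_linear]
      exact Finset.sum_congr rfl fun s1 _ => by rw [stepDist_delta]
    simp_rw [hv, Finset.sum_mul, Finset.mul_sum]
    rw [Finset.sum_comm]
    refine Finset.sum_congr rfl fun s1 _ => Finset.sum_congr rfl fun s' _ => by ring
  simp_rw [hterm]
  rw [Summable.tsum_finsetSum (fun s1 _ => ?_)]
  · rw [Finset.mul_sum]
    refine Finset.sum_congr rfl fun s1 _ => ?_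
    rw [tsum_mul_left, tsum_mul_left]
    show Mker P θ s s1 * (γ * Wc P θ γ c s1) = γ * (Mker P θ s s1 * Wc P θ γ c s1)
    ring
  · exact (((summable_inner hP hθ hγ0 hγ1 (deltaDist_nonneg s1) (sum_deltaDist s1)
      c).mul_left γ).mul_left (Mker P θ s s1))

lemma contraction_zero {K : S → S → ℝ} (hK0 : ∀ s s', 0 ≤ K s s') (hK1 : ∀ s, ∑ s', K s s' = 1)
    (hγ0 : 0 ≤ γ) (hγ1 : γ < 1) {e : S → ℝ}
    (he : ∀ s, e s = γ * ∑ s', K s s' * e s') : ∀ s, e s = 0 := by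
  intro s
  have hne : Nonempty S := ⟨s⟩
  have hU : (Finset.univ : Finset S).Nonempty := Finset.univ_nonempty
  set m := Finset.univ.sup' hU (fun s' => |e s'|) with hm
  obtain ⟨s0, -, hs0⟩ := Finset.exists_mem_eq_sup' hU (fun s' => |e s'|)
  have hbound : ∀ s', |e s'| ≤ m := fun s' => Finset.le_sup' (fun s'' => |e s''|) (Finset.mem_univ s')
  have hm0 : 0 ≤ m := le_trans (abs_nonneg (e s)) (hbound s)
  have hkey : m ≤ γ * m := by
    have h1 : |e s0| ≤ γ * m := by
      rw [he s0, abs_mul, abs_of_nonneg hγ0]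
      refine mul_le_mul_of_nonneg_left ?_ hγ0
      calc |∑ s', K s0 s' * e s'| ≤ ∑ s', |K s0 s' * e s'| := Finset.abs_sum_le_sum_abs _ _
        _ ≤ ∑ s', K s0 s' * m := by
            refine Finset.sum_le_sum fun s' _ => ?_
            rw [abs_mul, abs_of_nonneg (hK0 s0 s')]
            exact mul_le_mul_of_nonneg_left (hbound s') (hK0 s0 s')
        _ = m := by rw [← Finset.sum_mul, hK1 s0, one_mul]
    calc m = |e s0| := by rw [hm, hs0]
      _ ≤ γ * m := h1
  have : m ≤ 0 := by nlinarith
  have hmz : m = 0 := le_antisymm this hm0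
  have := hbound s
  rw [hmz] at this
  exact abs_eq_zero.mp (le_antisymm this (abs_nonneg _))

end Aux2

section Aux3
set_option linter.unusedSectionVars false

variable {P : S → (∀ i, A i) → S → ℝ} {θ θ' : ∀ i, S → A i → ℝ} {γ : ℝ}
  {rw : S → (∀ i, A i) → ℝ}

lemma Vval_eq_Wc (s : S) : Vval P θ γ rw s = Wc P θ γ (expRew rw θ) s := rfl

/-- Expansion of `∑_a π'(a|s) Q^θ(s,a)`. -/
lemma sum_pi_Q (s : S) :
    ∑ a, jointPi θ' s a * Qval P θ γ rw s a
      = expRew rw θ' s + γ * ∑ s1, Mker P θ' s s1 * Vval P θ γ rw s1 := by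
  unfold Qval expRew Mker
  simp_rw [mul_add, Finset.sum_add_distrib, Finset.sum_mul, Finset.mul_sum]
  congr 1
  rw [Finset.sum_comm]
  refine Finset.sum_congr rfl fun s1 _ => Finset.sum_congr rfl fun a _ => by ring

/-- Bellman: `V(s) = ∑_a π(a|s) Q(s,a)`. -/
lemma Vval_bellman (hP : stochMat P) (hθ : feasible θ) (hγ0 : 0 ≤ γ) (hγ1 : γ < 1) (s : S) :
    Vval P θ γ rw s = ∑ a, jointPi θ s a * Qval P θ γ rw s a := by
  rw [sum_pi_Q, Vval_eq_Wc, Wc_bellman hP hθ hγ0 hγ1]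
  simp_rw [Vval_eq_Wc]

/-- The policy-averaged advantage vanishes. -/
lemma sum_pi_Aval (hP : stochMat P) (hθ : feasible θ) (hγ0 : 0 ≤ γ) (hγ1 : γ < 1) (s : S) :
    ∑ a, jointPi θ s a * Aval P θ γ rw s a = 0 := by
  unfold Aval
  simp_rw [mul_sub]
  rw [Finset.sum_sub_distrib, ← Vval_bellman hP hθ hγ0 hγ1, ← Finset.sum_mul,
    sum_jointPi hθ, one_mul, sub_self]

/-- Performance difference: `V^{θ'} - V^θ` equals the discounted accumulation (under `θ'`)
of the policy-averaged advantage of `θ`. -/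
lemma vdiff_eq_Wc (hP : stochMat P) (hθ : feasible θ) (hθ' : feasible θ')
    (hγ0 : 0 ≤ γ) (hγ1 : γ < 1) (s : S) :
    Vval P θ' γ rw s - Vval P θ γ rw s
      = Wc P θ' γ (fun s' => ∑ a, jointPi θ' s' a * Aval P θ γ rw s' a) s := by
  set g : S → ℝ := fun s' => ∑ a, jointPi θ' s' a * Aval P θ γ rw s' a with hg
  set e : S → ℝ := fun s' => (Vval P θ' γ rw s' - Vval P θ γ rw s') - Wc P θ' γ g s' with he
  have key : ∀ s', e s' = γ * ∑ s1, Mker P θ' s' s1 * e s1 := by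
    intro s'
    have hV' : Vval P θ' γ rw s' = expRew rw θ' s'
        + γ * ∑ s1, Mker P θ' s' s1 * Vval P θ' γ rw s1 := by
      rw [Vval_eq_Wc, Wc_bellman hP hθ' hγ0 hγ1]
      simp_rw [Vval_eq_Wc]
    have hgval : g s' = expRew rw θ' s' + γ * ∑ s1, Mker P θ' s' s1 * Vval P θ γ rw s1
        - Vval P θ γ rw s' := by
      rw [hg]
      simp only
      unfold Aval
      simp_rw [mul_sub]
      rw [Finset.sum_sub_distrib, sum_pi_Q, ← Finset.sum_mul, sum_jointPi hθ', one_mul]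
    have hW : Wc P θ' γ g s' = g s' + γ * ∑ s1, Mker P θ' s' s1 * Wc P θ' γ g s1 :=
      Wc_bellman hP hθ' hγ0 hγ1 g s'
    have expand : ∀ s1, e s1 = (Vval P θ' γ rw s1 - Vval P θ γ rw s1) - Wc P θ' γ g s1 :=
      fun _ => rfl
    show (Vval P θ' γ rw s' - Vval P θ γ rw s') - Wc P θ' γ g s' = _
    rw [hV', hW, hgval]
    simp_rw [expand, mul_sub, Finset.sum_sub_distrib]
    ring
  have := contraction_zero (Mker_nonneg hP hθ') (sum_Mker hP hθ') hγ0 hγ1 key s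
  have h2 : (Vval P θ' γ rw s - Vval P θ γ rw s) - Wc P θ' γ g s = 0 := this
  linarith

end Aux3

section Aux4
set_option linter.unusedSectionVars false

variable {P : S → (∀ i, A i) → S → ℝ} {θ θ' : ∀ i, S → A i → ℝ} {γ : ℝ}
  {rw : S → (∀ i, A i) → ℝ} {ρ : S → ℝ}

lemma sum_mul_deltaDist (v : S → ℝ) (s0 : S) : ∑ s', v s' * deltaDist s0 s' = v s0 := by
  rw [Finset.sum_eq_single s0 (fun b _ hb => by simp [deltaDist, hb]) (by simp)]
  simp [deltaDist]

lemma summable_pt (hP : stochMat P) (hθ' : feasible θ') (hγ0 : 0 ≤ γ) (hγ1 : γ < 1)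
    {μ : S → ℝ} (hμ : ∀ s, 0 ≤ μ s) (hμ1 : ∑ s, μ s = 1) (s0 : S) :
    Summable (fun t : ℕ => γ ^ t * visit P θ' t μ s0) := by
  have h := summable_inner (θ := θ') hP hθ' hγ0 hγ1 hμ hμ1 (deltaDist s0)
  simpa only [sum_mul_deltaDist] using h

lemma Jdiff (hP : stochMat P) (hθ : feasible θ) (hθ' : feasible θ')
    (hγ0 : 0 ≤ γ) (hγ1 : γ < 1) (hρ : initDist ρ) (sstar : S)
    (hg : ∀ s, s ≠ sstar → (∑ a, jointPi θ' s a * Aval P θ γ rw s a) = 0) :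
    Jval P θ' γ rw ρ - Jval P θ γ rw ρ
      = (dvisit P θ' γ ρ sstar / (1 - γ))
          * ∑ a, jointPi θ' sstar a * Aval P θ γ rw sstar a := by
  set g : S → ℝ := fun s' => ∑ a, jointPi θ' s' a * Aval P θ γ rw s' a with hgdef
  have hγne : (1 : ℝ) - γ ≠ 0 := by linarith
  have step1 : Jval P θ' γ rw ρ - Jval P θ γ rw ρ = ∑ s, ρ s * Wc P θ' γ g s := by
    unfold Jval
    rw [← Finset.sum_sub_distrib]
    refine Finset.sum_congr rfl fun s _ => ?_
    rw [← mul_sub, vdiff_eq_Wc hP hθ hθ' hγ0 hγ1]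
  have step2 : ∀ s, Wc P θ' γ g s
      = (∑' t : ℕ, γ ^ t * visit P θ' t (deltaDist s) sstar) * g sstar := by
    intro s
    unfold Wc
    rw [← tsum_mul_right]
    refine tsum_congr fun t => ?_
    have : ∑ s', visit P θ' t (deltaDist s) s' * g s' =
        visit P θ' t (deltaDist s) sstar * g sstar := by
      rw [Finset.sum_eq_single sstar
        (fun b _ hb => by simp only [hgdef]; rw [hg b hb, mul_zero]) (by simp)]
    rw [this]; ring
  have step3 : ∑ s, ρ s * Wc P θ' γ g s
      = (∑' t : ℕ, γ ^ t * visit P θ' t ρ sstar) * g sstar := by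
    simp_rw [step2]
    have inner : ∑ s, ρ s * ∑' t : ℕ, γ ^ t * visit P θ' t (deltaDist s) sstar
        = ∑' t : ℕ, γ ^ t * visit P θ' t ρ sstar := by
      have h1 : ∀ s : S, ρ s * ∑' t : ℕ, γ ^ t * visit P θ' t (deltaDist s) sstar
          = ∑' t : ℕ, ρ s * (γ ^ t * visit P θ' t (deltaDist s) sstar) :=
        fun s => tsum_mul_left.symm
      simp_rw [h1]
      rw [← Summable.tsum_finsetSum (fun s _ => (summable_pt hP hθ' hγ0 hγ1 (deltaDist_nonneg s)
        (sum_deltaDist s) sstar).mul_left (ρ s))]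
      refine tsum_congr fun t => ?_
      rw [visit_linear t ρ sstar, Finset.mul_sum]
      exact Finset.sum_congr rfl fun s _ => by ring
    calc ∑ s, ρ s * ((∑' t : ℕ, γ ^ t * visit P θ' t (deltaDist s) sstar) * g sstar)
        = (∑ s, ρ s * ∑' t : ℕ, γ ^ t * visit P θ' t (deltaDist s) sstar) * g sstar := by
          rw [Finset.sum_mul]; exact Finset.sum_congr rfl fun s _ => by ring
      _ = _ := by rw [inner]
  have step4 : dvisit P θ' γ ρ sstar / (1 - γ) = ∑' t : ℕ, γ ^ t * visit P θ' t ρ sstar := by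
    unfold dvisit
    field_simp
  rw [step1, step3, step4]

end Aux4

section Aux5
set_option linter.unusedSectionVars false

variable {P : S → (∀ i, A i) → S → ℝ} {θ : ∀ i, S → A i → ℝ} {γ : ℝ}
  {rw : S → (∀ i, A i) → ℝ}

lemma sum_pi_match (hθ : feasible θ) (s : S) (I : Finset (Fin n)) (b : ∀ i, A i) :
    ∑ a : ∀ i, A i, (if ∀ i ∈ I, a i = b i then ∏ j, θ j s (a j) else 0)
      = ∏ i ∈ I, θ i s (b i) := by
  have hpt : ∀ a : ∀ i, A i, (if ∀ i ∈ I, a i = b i then ∏ j, θ j s (a j) else 0)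
      = ∏ j, (if j ∈ I then (if a j = b j then θ j s (a j) else 0) else θ j s (a j)) := by
    intro a
    by_cases h : ∀ i ∈ I, a i = b i
    · rw [if_pos h]
      refine Finset.prod_congr rfl fun j _ => ?_
      by_cases hj : j ∈ I
      · rw [if_pos hj, if_pos (h j hj)]
      · rw [if_neg hj]
    · rw [if_neg h]
      push_neg at h
      obtain ⟨i, hi, hne⟩ := h
      refine (Finset.prod_eq_zero (Finset.mem_univ i) ?_).symm
      rw [if_pos hi, if_neg hne]
  simp_rw [hpt]
  rw [← Fintype.prod_sum
    (fun j (x : A j) => if j ∈ I then (if x = b j then θ j s x else 0) else θ j s x)]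
  have hcol : ∀ j, (∑ x, (if j ∈ I then (if x = b j then θ j s x else 0) else θ j s x))
      = (if j ∈ I then θ j s (b j) else 1) := by
    intro j
    by_cases hj : j ∈ I
    · simp only [if_pos hj]
      rw [Finset.sum_eq_single (b j) (fun x _ hx => if_neg hx) (by simp), if_pos rfl]
    · simp only [if_neg hj]; exact (hθ j s).2
  simp_rw [hcol]
  rw [← Finset.prod_subset (Finset.subset_univ I) (fun x _ hx => if_neg hx)]
  exact Finset.prod_congr rfl fun i hi => if_pos hi

lemma sum_pi_AbarSet (hP : stochMat P) (hθ : feasible θ) (hγ0 : 0 ≤ γ) (hγ1 : γ < 1)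
    (I : Finset (Fin n)) (s : S) :
    ∑ a, jointPi θ s a * AbarSet P θ γ rw I s a = 0 := by
  unfold AbarSet
  simp_rw [Finset.mul_sum, mul_ite, mul_zero]
  rw [Finset.sum_comm]
  have key : ∀ b : ∀ i, A i,
      (∑ a : ∀ i, A i, if ∀ i ∈ I, b i = a i then
        jointPi θ s a * ((∏ j ∈ Iᶜ, θ j s (b j)) * Aval P θ γ rw s b) else 0)
        = jointPi θ s b * Aval P θ γ rw s b := by
    intro b
    have hsw : ∀ a : ∀ i, A i, (if ∀ i ∈ I, b i = a i then
        jointPi θ s a * ((∏ j ∈ Iᶜ, θ j s (b j)) * Aval P θ γ rw s b) else 0)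
        = (if ∀ i ∈ I, a i = b i then jointPi θ s a else 0)
            * ((∏ j ∈ Iᶜ, θ j s (b j)) * Aval P θ γ rw s b) := by
      intro a
      by_cases h : ∀ i ∈ I, a i = b i
      · rw [if_pos (fun i hi => (h i hi).symm), if_pos h]
      · rw [if_neg (fun hh => h fun i hi => (hh i hi).symm), if_neg h, zero_mul]
    simp_rw [hsw]
    rw [← Finset.sum_mul]
    have sumeq : ∑ a : ∀ i, A i, (if ∀ i ∈ I, a i = b i then jointPi θ s a else 0)
        = ∏ i ∈ I, θ i s (b i) := sum_pi_match hθ s I b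
    rw [sumeq, ← mul_assoc, Finset.prod_mul_prod_compl I (fun j => θ j s (b j))]
    rfl
  simp_rw [key]
  exact sum_pi_Aval hP hθ hγ0 hγ1 s

lemma AbarSet_univ (s : S) (a : ∀ i, A i) :
    AbarSet P θ γ rw Finset.univ s a = Aval P θ γ rw s a := by
  unfold AbarSet
  have hc : ∀ b : ∀ i, A i, (∀ i ∈ Finset.univ, b i = a i) ↔ b = a :=
    fun b => ⟨fun h => funext fun i => h i (Finset.mem_univ i), fun h i _ => by rw [h]⟩
  simp_rw [hc]
  rw [Finset.sum_eq_single a (fun b _ hb => if_neg hb) (by simp)]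
  rw [if_pos rfl, Finset.compl_univ, Finset.prod_empty, one_mul]

end Aux5
end MAMDP

open MAMDP

/-- Fully mixed Nash equilibria of a (non-degenerate) Markov potential game are
saddle points of the total potential function: arbitrarily close feasible policies
attain a strictly larger potential value. -/
theorem stmt14 {n : ℕ} {S : Type} [Fintype S] [DecidableEq S]
    {A : Fin n → Type} [∀ i, Fintype (A i)] [∀ i, DecidableEq (A i)]
    (P : S → (∀ i, A i) → S → ℝ) (hP : stochMat P)
    (r : Fin n → S → (∀ i, A i) → ℝ) (hr : ∀ i s a, 0 ≤ r i s a ∧ r i s a ≤ 1)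
    (γ : ℝ) (hγ0 : 0 ≤ γ) (hγ1 : γ < 1)
    (ρ : S → ℝ) (hρ : initDist ρ)
    (φ : S → (∀ i, A i) → ℝ) (hpot : isPotential P γ r φ)
    (hd : ∀ θ : ∀ i, S → A i → ℝ, feasible θ → ∀ s, 0 < dvisit P θ γ ρ s)
    (θstar : ∀ i, S → A i → ℝ) (hNE : isNE P γ r ρ θstar)
    (hmix : ∀ i s a, 0 < θstar i s a)
    (hnc : ∃ θ1 θ2 : ∀ i, S → A i → ℝ, feasible θ1 ∧ feasible θ2 ∧
      Jval P θ1 γ φ ρ ≠ Jval P θ2 γ φ ρ) :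
    ∀ δ > (0 : ℝ), ∃ θ : ∀ i, S → A i → ℝ, feasible θ ∧
      Real.sqrt (polNormSq θ θstar) ≤ δ ∧
      Jval P θstar γ φ ρ < Jval P θ γ φ ρ := by
  intro δ hδ
  have hθs : feasible θstar := hNE.1
  have hγpos : (0 : ℝ) < 1 - γ := by linarith
  obtain ⟨θ1, θ2, hf1, hf2, hne12⟩ := hnc
  -- Case analysis: some averaged potential advantage is positive, or all vanish.
  by_cases hT : ∃ (I : Finset (Fin n)) (s : S) (a : ∀ i, A i),
      0 < AbarSet P θstar γ φ I s a
  swap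
  · -- degenerate case: the potential value function is constant, contradiction.
    exfalso
    push_neg at hT
    have hAle : ∀ (s : S) (a : ∀ i, A i), Aval P θstar γ φ s a ≤ 0 := by
      intro s a
      have := hT Finset.univ s a
      rwa [AbarSet_univ] at this
    have hA0 : ∀ (s : S) (a : ∀ i, A i), Aval P θstar γ φ s a = 0 := by
      intro s a
      have hsum := sum_pi_Aval (rw := φ) hP hθs hγ0 hγ1 s
      have hterm : ∀ b ∈ Finset.univ, jointPi θstar s b * Aval P θstar γ φ s b ≤ 0 :=
        fun b _ => mul_nonpos_of_nonneg_of_nonpos (jointPi_nonneg hθs s b) (hAle s b)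
      have hz := (Finset.sum_eq_zero_iff_of_nonpos hterm).mp hsum a (Finset.mem_univ a)
      have hpos : 0 < jointPi θstar s a := Finset.prod_pos fun i _ => hmix i s (a i)
      exact (mul_eq_zero.mp hz).resolve_left (ne_of_gt hpos)
    have hVconst : ∀ θ0 : ∀ i, S → A i → ℝ, feasible θ0 →
        ∀ s, Vval P θ0 γ φ s = Vval P θstar γ φ s := by
      intro θ0 hf0 s
      have key : ∀ s', (Vval P θ0 γ φ s' - Vval P θstar γ φ s')
          = γ * ∑ s1, Mker P θ0 s' s1 * (Vval P θ0 γ φ s1 - Vval P θstar γ φ s1) := by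
        intro s'
        have h1 : Vval P θ0 γ φ s' = expRew φ θ0 s'
            + γ * ∑ s1, Mker P θ0 s' s1 * Vval P θ0 γ φ s1 := by
          rw [Vval_eq_Wc, Wc_bellman hP hf0 hγ0 hγ1]
          simp_rw [Vval_eq_Wc]
        have h2 : Vval P θstar γ φ s' = expRew φ θ0 s'
            + γ * ∑ s1, Mker P θ0 s' s1 * Vval P θstar γ φ s1 := by
          have h3 := sum_pi_Q (P := P) (θ := θstar) (θ' := θ0) (γ := γ) (rw := φ) s'
          have h4 : ∀ a, Qval P θstar γ φ s' a = Vval P θstar γ φ s' := by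
            intro a
            have := hA0 s' a
            unfold Aval at this
            linarith
          simp_rw [h4, ← Finset.sum_mul, sum_jointPi hf0, one_mul] at h3
          exact h3
        rw [h1, h2]
        simp_rw [mul_sub, Finset.sum_sub_distrib]
        ring
      have := contraction_zero (Mker_nonneg hP hf0) (sum_Mker hP hf0) hγ0 hγ1 key s
      linarith
    apply hne12
    unfold Jval
    refine Finset.sum_congr rfl fun s _ => ?_
    rw [hVconst θ1 hf1 s, hVconst θ2 hf2 s]
  -- Main case.
  have hEx : ∃ k : ℕ, ∃ (I : Finset (Fin n)) (s : S) (a : ∀ i, A i),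
      I.card = k ∧ 0 < AbarSet P θstar γ φ I s a := by
    obtain ⟨I, s, a, h⟩ := hT
    exact ⟨I.card, I, s, a, rfl, h⟩
  set k0 := Nat.find hEx with hk0
  obtain ⟨I, sstar, astar, hIcard, hIpos⟩ := Nat.find_spec hEx
  have hmin : ∀ (J : Finset (Fin n)) (s : S) (a : ∀ i, A i), J.card < k0 →
      AbarSet P θstar γ φ J s a ≤ 0 := by
    intro J s a hJ
    by_contra h
    push_neg at h
    exact Nat.find_min hEx hJ ⟨J, s, a, rfl, h⟩
  have hzero : ∀ J : Finset (Fin n), J ⊆ I → J ≠ I → ∀ (s : S) (a : ∀ i, A i),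
      AbarSet P θstar γ φ J s a = 0 := by
    intro J hJI hJne s a
    have hcard : J.card < k0 := by
      rw [hk0, ← hIcard]
      exact Finset.card_lt_card (HasSubset.Subset.ssubset_of_ne hJI hJne)
    have hsum := sum_pi_AbarSet (rw := φ) hP hθs hγ0 hγ1 J s
    have hterm : ∀ b ∈ Finset.univ, jointPi θstar s b * AbarSet P θstar γ φ J s b ≤ 0 :=
      fun b _ => mul_nonpos_of_nonneg_of_nonpos (jointPi_nonneg hθs s b) (hmin J s b hcard)
    have hz := (Finset.sum_eq_zero_iff_of_nonpos hterm).mp hsum a (Finset.mem_univ a)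
    have hpos : 0 < jointPi θstar s a := Finset.prod_pos fun i _ => hmix i s (a i)
    exact (mul_eq_zero.mp hz).resolve_left (ne_of_gt hpos)
  -- the perturbation
  set v : ∀ i, S → A i → ℝ := fun i s a =>
    if i ∈ I ∧ s = sstar then (if a = astar i then 1 else 0) - θstar i s a else 0 with hv
  set D : ℝ := ∑ i, ∑ s, ∑ a, (v i s a) ^ 2 with hD
  have hD0 : 0 ≤ D := Finset.sum_nonneg fun i _ => Finset.sum_nonneg fun s _ =>
    Finset.sum_nonneg fun a _ => sq_nonneg _
  set η := min 1 (δ / (Real.sqrt D + 1)) with hη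
  have hsD : 0 ≤ Real.sqrt D := Real.sqrt_nonneg D
  have hη0 : 0 < η := lt_min one_pos (div_pos hδ (by positivity))
  have hη1 : η ≤ 1 := min_le_left _ _
  set θ' : ∀ i, S → A i → ℝ := fun i s a => θstar i s a + η * v i s a with hθ'
  have hθ'val : ∀ i s a, i ∈ I → s = sstar →
      θ' i s a = η * (if a = astar i then 1 else 0) + (1 - η) * θstar i s a := by
    intro i s a hi hs
    have hcond : i ∈ I ∧ s = sstar := ⟨hi, hs⟩
    simp only [hθ', hv, if_pos hcond]
    ring
  have hθ'eq : ∀ i s a, ¬(i ∈ I ∧ s = sstar) → θ' i s a = θstar i s a := by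
    intro i s a hc
    simp only [hθ', hv, if_neg hc, mul_zero, add_zero]
  have hfeas' : feasible θ' := by
    intro i s
    by_cases hc : i ∈ I ∧ s = sstar
    · constructor
      · intro a
        rw [hθ'val i s a hc.1 hc.2]
        have h1 : (0:ℝ) ≤ (if a = astar i then (1:ℝ) else 0) := by split <;> norm_num
        have h2 := (hθs i s).1 a
        nlinarith
      · have : ∀ a, θ' i s a = η * (if a = astar i then 1 else 0) + (1 - η) * θstar i s a :=
          fun a => hθ'val i s a hc.1 hc.2
        simp_rw [this]
        rw [Finset.sum_add_distrib, ← Finset.mul_sum, ← Finset.mul_sum, (hθs i s).2,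
          Finset.sum_eq_single (astar i) (fun b _ hb => if_neg hb) (by simp), if_pos rfl]
        ring
    · constructor
      · intro a
        rw [hθ'eq i s a hc]
        exact (hθs i s).1 a
      · have : ∀ a, θ' i s a = θstar i s a := fun a => hθ'eq i s a hc
        simp_rw [this]
        exact (hθs i s).2
  -- distance bound
  have hdist : Real.sqrt (polNormSq θ' θstar) ≤ δ := by
    have hps : polNormSq θ' θstar = η ^ 2 * D := by
      unfold polNormSq
      rw [hD, Finset.mul_sum]
      refine Finset.sum_congr rfl fun i _ => ?_
      rw [Finset.mul_sum]
      refine Finset.sum_congr rfl fun s _ => ?_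
      rw [Finset.mul_sum]
      refine Finset.sum_congr rfl fun a _ => ?_
      simp only [hθ']
      ring
    rw [hps, Real.sqrt_mul (sq_nonneg η), Real.sqrt_sq hη0.le]
    have hle : η ≤ δ / (Real.sqrt D + 1) := min_le_right _ _
    calc η * Real.sqrt D ≤ (δ / (Real.sqrt D + 1)) * Real.sqrt D :=
          mul_le_mul_of_nonneg_right hle hsD
      _ ≤ δ := by
          rw [div_mul_eq_mul_div, div_le_iff₀ (by positivity)]
          nlinarith [hδ.le]
  -- the averaged advantage under θ' vanishes off sstar
  have hgzero : ∀ s, s ≠ sstar → ∑ a, jointPi θ' s a * Aval P θstar γ φ s a = 0 := by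
    intro s hs
    have : ∀ a, jointPi θ' s a = jointPi θstar s a := by
      intro a
      unfold jointPi
      exact Finset.prod_congr rfl fun i _ => hθ'eq i s (a i) (fun h => hs h.2)
    simp_rw [this]
    exact sum_pi_Aval hP hθs hγ0 hγ1 s
  -- and equals η^k0 ĀI(s*,a*) at sstar
  have hgstar : ∑ a, jointPi θ' sstar a * Aval P θstar γ φ sstar a
      = η ^ k0 * AbarSet P θstar γ φ I sstar astar := by
    have hsplit : ∀ a : ∀ i, A i, jointPi θ' sstar a
        = (∑ J ∈ I.powerset, η ^ J.card * (if ∀ i ∈ J, a i = astar i then (1:ℝ) else 0)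
            * ((1 - η) ^ (I \ J).card * ∏ i ∈ I \ J, θstar i sstar (a i)))
          * ∏ i ∈ Iᶜ, θstar i sstar (a i) := by
      intro a
      unfold jointPi
      rw [← Finset.prod_mul_prod_compl I]
      congr 1
      · have hval : ∀ i ∈ I, θ' i sstar (a i)
            = η * (if a i = astar i then (1:ℝ) else 0) + (1 - η) * θstar i sstar (a i) :=
          fun i hi => hθ'val i sstar (a i) hi rfl
        rw [Finset.prod_congr rfl hval, Finset.prod_add]
        refine Finset.sum_congr rfl fun J hJ => ?_
        rw [Finset.prod_mul_distrib, Finset.prod_const, Finset.prod_boole,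
          Finset.prod_mul_distrib, Finset.prod_const]
        split <;> ring
      · exact Finset.prod_congr rfl fun i hi =>
          hθ'eq i sstar (a i) (fun h => (Finset.mem_compl.mp hi) h.1)
    have hunion : ∀ J ∈ I.powerset, (I \ J) ∪ Iᶜ = Jᶜ := by
      intro J hJ
      have hJI := Finset.mem_powerset.mp hJ
      ext x
      simp only [Finset.mem_union, Finset.mem_sdiff, Finset.mem_compl]
      constructor
      · rintro (⟨-, hx⟩ | hx)
        · exact hx
        · exact fun hxJ => hx (hJI hxJ)
      · intro hx
        by_cases hxI : x ∈ I
        · exact Or.inl ⟨hxI, hx⟩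
        · exact Or.inr hxI
    have hJterm : ∀ J ∈ I.powerset,
        (∑ a : ∀ i, A i, η ^ J.card * (if ∀ i ∈ J, a i = astar i then (1:ℝ) else 0)
          * ((1 - η) ^ (I \ J).card * ∏ i ∈ I \ J, θstar i sstar (a i))
          * (∏ i ∈ Iᶜ, θstar i sstar (a i)) * Aval P θstar γ φ sstar a)
        = η ^ J.card * (1 - η) ^ (I \ J).card * AbarSet P θstar γ φ J sstar astar := by
      intro J hJ
      unfold AbarSet
      rw [Finset.mul_sum]
      refine Finset.sum_congr rfl fun a _ => ?_
      have hprods : (∏ i ∈ I \ J, θstar i sstar (a i)) * ∏ i ∈ Iᶜ, θstar i sstar (a i)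
          = ∏ i ∈ Jᶜ, θstar i sstar (a i) := by
        rw [← hunion J hJ, Finset.prod_union
          (Disjoint.mono_left Finset.sdiff_subset disjoint_compl_right)]
      by_cases hcond : ∀ i ∈ J, a i = astar i
      · rw [if_pos hcond, if_pos hcond, ← hprods]
        generalize η ^ J.card = u
        generalize (1 - η) ^ (I \ J).card = w
        ring
      · rw [if_neg hcond, if_neg hcond]
        generalize η ^ J.card = u
        generalize (1 - η) ^ (I \ J).card = w
        ring
    have main : ∑ a : ∀ i, A i, jointPi θ' sstar a * Aval P θstar γ φ sstar a
        = ∑ J ∈ I.powerset, ∑ a : ∀ i, A i,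
            η ^ J.card * (if ∀ i ∈ J, a i = astar i then (1:ℝ) else 0)
              * ((1 - η) ^ (I \ J).card * ∏ i ∈ I \ J, θstar i sstar (a i))
              * (∏ i ∈ Iᶜ, θstar i sstar (a i)) * Aval P θstar γ φ sstar a := by
      calc ∑ a : ∀ i, A i, jointPi θ' sstar a * Aval P θstar γ φ sstar a
          = ∑ a : ∀ i, A i, ∑ J ∈ I.powerset,
              η ^ J.card * (if ∀ i ∈ J, a i = astar i then (1:ℝ) else 0)
                * ((1 - η) ^ (I \ J).card * ∏ i ∈ I \ J, θstar i sstar (a i))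
                * (∏ i ∈ Iᶜ, θstar i sstar (a i)) * Aval P θstar γ φ sstar a :=
            Finset.sum_congr rfl fun a _ => by
              rw [hsplit a, Finset.sum_mul, Finset.sum_mul]
        _ = _ := Finset.sum_comm
    rw [hk0, main, Finset.sum_eq_single_of_mem I (Finset.mem_powerset_self I)
        (fun J hJ hJne => by
          rw [hJterm J hJ, hzero J (Finset.mem_powerset.mp hJ) hJne sstar astar, mul_zero]),
      hJterm I (Finset.mem_powerset_self I), Finset.sdiff_self, Finset.card_empty,
      pow_zero, mul_one, hIcard]
  -- conclude
  refine ⟨θ', hfeas', hdist, ?_⟩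
  have hJd := Jdiff (rw := φ) hP hθs hfeas' hγ0 hγ1 hρ sstar hgzero
  rw [hgstar] at hJd
  have hposd : 0 < dvisit P θ' γ ρ sstar / (1 - γ) :=
    div_pos (hd θ' hfeas' sstar) hγpos
  have hposg : 0 < η ^ k0 * AbarSet P θstar γ φ I sstar astar :=
    mul_pos (pow_pos hη0 k0) hIpos
  nlinarith [mul_pos hposd hposg]
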